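/- Let γ¹ : ℤ → ℝ² and γ² : ℤ → ℝ² be two discrete plane curves, and define z^m_n = det[γ¹_n, γ²_m] + Σ_k^n det[γ¹_{k−1}, γ¹_k] − Σ_k^m det[γ²_{k−1}, γ²_k] (bidirectional sums) and f^m_n = (γ¹_n + γ²_m, z^m_n) ∈ ℝ³. Then for every (n, m) ∈ ℤ², each of the four difference vectors f^m_{n+1} − f^m_n, f^m_{n−1} − f^m_n, f^{m+1}_n − f^m_n, f^{m−1}_n − f^m_n has the form (ξ, det[γ¹_n − γ²_m, ξ]) ∈ ℝ² × ℝ, where ξ ∈ ℝ² is its pair of first two coordinates. Consequently, the five points f^m_n, f^m_{n+1}, f^m_{n−1}, f^{m+1}_n, f^{m−1}_n all lie on a common affine plane in ℝ³, namely the plane through f^m_n with direction space {(ξ, det[γ¹_n − γ²_m, ξ]) : ξ ∈ ℝ²}. -/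

import Mathlib

/-- Bidirectional sum: `Σ_k^n x_k = Σ_{k=1}^n x_k` for `n ≥ 1`, `0` for `n = 0`, and
`−Σ_{k=n+1}^0 x_k` for `n ≤ −1`. -/
noncomputable def bsum (x : ℤ → ℝ) (n : ℤ) : ℝ :=
  if 1 ≤ n then ∑ k ∈ Finset.Icc (1:ℤ) n, x k
  else if n = 0 then 0
  else -∑ k ∈ Finset.Icc (n+1) (0:ℤ), x k

/-- Determinant of the `2×2` matrix with columns `a`, `b` in `ℝ²`. -/
def det2 (a b : ℝ × ℝ) : ℝ := a.1 * b.2 - a.2 * b.1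

/-!
Stepping from `n` to a neighbour `n' = n ± 1` changes the bidirectional sum
`Σ_k^n det[γ_{k-1}, γ_k]` by `det[γ_n, γ_{n'}]` in both directions, so by bilinearity and
antisymmetry of `det`,
`z^m_{n'} - z^m_n = det[γ¹_{n'} - γ¹_n, γ²_m] + det[γ¹_n, γ¹_{n'}] = det[γ¹_n - γ²_m, γ¹_{n'} - γ¹_n]`,
and symmetrically in `m`.
-/

open Finset

lemma bsum_of_nonneg (x : ℤ → ℝ) {n : ℤ} (hn : 0 ≤ n) : bsum x n = ∑ k ∈ Icc 1 n, x k := by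
  rcases hn.eq_or_lt with rfl | hn
  · simp [bsum]
  · simp [bsum, show 1 ≤ n by omega]

lemma bsum_of_nonpos (x : ℤ → ℝ) {n : ℤ} (hn : n ≤ 0) :
    bsum x n = -∑ k ∈ Icc (n + 1) 0, x k := by
  rcases hn.eq_or_lt with rfl | hn
  · simp [bsum]
  · simp [bsum, show ¬1 ≤ n by omega, hn.ne]

lemma bsum_succ (x : ℤ → ℝ) (n : ℤ) : bsum x (n + 1) = bsum x n + x (n + 1) := by
  rcases lt_or_ge n 0 with hn | hn
  · rw [bsum_of_nonpos x hn.le, bsum_of_nonpos x hn,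
      ← insert_Icc_add_one_left_eq_Icc (show n + 1 ≤ 0 by omega), sum_insert (by simp)]
    ring
  · rw [bsum_of_nonneg x hn, bsum_of_nonneg x (by omega), ← insert_Icc_right_eq_Icc_add_one
      (by omega), sum_insert (by simp)]
    ring

lemma bsum_sub_one (x : ℤ → ℝ) (n : ℤ) : bsum x (n - 1) = bsum x n - x n := by
  rw [eq_sub_iff_add_eq]
  simpa using (bsum_succ x (n - 1)).symm

lemma det2_swap (a b : ℝ × ℝ) : det2 b a = -det2 a b := by
  simp only [det2]
  ring

lemma bsum_det2_of_adjacent (γ : ℤ → ℝ × ℝ) {n n' : ℤ} (h : n' = n + 1 ∨ n' = n - 1) :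
    bsum (fun k => det2 (γ (k - 1)) (γ k)) n' =
      bsum (fun k => det2 (γ (k - 1)) (γ k)) n + det2 (γ n) (γ n') := by
  rcases h with rfl | rfl
  · simp [bsum_succ]
  · simp only [bsum_sub_one, det2_swap (γ n)]
    ring

noncomputable def asymptoticHeight (γ₁ γ₂ : ℤ → ℝ × ℝ) (n m : ℤ) : ℝ :=
  det2 (γ₁ n) (γ₂ m) + bsum (fun k => det2 (γ₁ (k - 1)) (γ₁ k)) n
    - bsum (fun k => det2 (γ₂ (k - 1)) (γ₂ k)) m

section
variable (γ₁ γ₂ : ℤ → ℝ × ℝ)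

lemma asymptoticHeight_sub_of_adjacent_left {n n' : ℤ} (m : ℤ) (h : n' = n + 1 ∨ n' = n - 1) :
    asymptoticHeight γ₁ γ₂ n' m - asymptoticHeight γ₁ γ₂ n m =
      det2 (γ₁ n - γ₂ m) (γ₁ n' - γ₁ n) := by
  simp only [asymptoticHeight]
  rw [bsum_det2_of_adjacent γ₁ h]
  simp only [det2, Prod.fst_sub, Prod.snd_sub]
  ring

lemma asymptoticHeight_sub_of_adjacent_right (n : ℤ) {m m' : ℤ} (h : m' = m + 1 ∨ m' = m - 1) :
    asymptoticHeight γ₁ γ₂ n m' - asymptoticHeight γ₁ γ₂ n m =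
      det2 (γ₁ n - γ₂ m) (γ₂ m' - γ₂ m) := by
  simp only [asymptoticHeight]
  rw [bsum_det2_of_adjacent γ₂ h]
  simp only [det2, Prod.fst_sub, Prod.snd_sub]
  ring

end

/-- For `f^m_n = (γ¹_n + γ²_m, z^m_n) ∈ ℝ² × ℝ`, each of the four difference vectors from
`f^m_n` to its neighbours has the form `(ξ, det[γ¹_n − γ²_m, ξ])`; consequently the five
points `f^m_n, f^m_{n±1}, f^{m±1}_n` lie on the affine plane through `f^m_n` with direction
space `{(ξ, det[γ¹_n − γ²_m, ξ]) : ξ ∈ ℝ²}`.  Here `f n m` denotes `f^m_n`. -/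
theorem stmt14 (γ₁ γ₂ : ℤ → ℝ × ℝ)
    (z : ℤ → ℤ → ℝ)
    (hz : ∀ n m, z n m = det2 (γ₁ n) (γ₂ m)
      + bsum (fun k => det2 (γ₁ (k-1)) (γ₁ k)) n
      - bsum (fun k => det2 (γ₂ (k-1)) (γ₂ k)) m)
    (f : ℤ → ℤ → (ℝ × ℝ) × ℝ)
    (hf : ∀ n m, f n m = (γ₁ n + γ₂ m, z n m)) :
    ∀ n m : ℤ,
      ((f (n+1) m - f n m).2 = det2 (γ₁ n - γ₂ m) (f (n+1) m - f n m).1 ∧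
       (f (n-1) m - f n m).2 = det2 (γ₁ n - γ₂ m) (f (n-1) m - f n m).1 ∧
       (f n (m+1) - f n m).2 = det2 (γ₁ n - γ₂ m) (f n (m+1) - f n m).1 ∧
       (f n (m-1) - f n m).2 = det2 (γ₁ n - γ₂ m) (f n (m-1) - f n m).1) ∧
      ∀ p ∈ ({f n m, f (n+1) m, f (n-1) m, f n (m+1), f n (m-1)} :
          Set ((ℝ × ℝ) × ℝ)),
        p - f n m ∈ {x : (ℝ × ℝ) × ℝ | x.2 = det2 (γ₁ n - γ₂ m) x.1} := by
  obtain rfl : z = asymptoticHeight γ₁ γ₂ := funext fun n => funext (hz n)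
  intro n m
  have left (n' : ℤ) (h : n' = n + 1 ∨ n' = n - 1) :
      (f n' m - f n m).2 = det2 (γ₁ n - γ₂ m) (f n' m - f n m).1 := by
    simpa [hf] using asymptoticHeight_sub_of_adjacent_left γ₁ γ₂ m h
  have right (m' : ℤ) (h : m' = m + 1 ∨ m' = m - 1) :
      (f n m' - f n m).2 = det2 (γ₁ n - γ₂ m) (f n m' - f n m).1 := by
    simpa [hf] using asymptoticHeight_sub_of_adjacent_right γ₁ γ₂ n h
  have edges : _ ∧ _ ∧ _ ∧ _ :=
    ⟨left _ (.inl rfl), left _ (.inr rfl), right _ (.inl rfl), right _ (.inr rfl)⟩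
  refine ⟨edges, ?_⟩
  rintro p (rfl | rfl | rfl | rfl | rfl)
  · simp [det2]
  exacts [edges.1, edges.2.1, edges.2.2.1, edges.2.2.2]
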